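/- arXiv:2311.14569 — 2 statements merged into one kernel-verified Lean document; each statement's English description precedes it below -/
import Mathlib

section
/- For 0 < Ω_m < 1, the function a(t) = ((t³ − Ω_m)/(1 − Ω_m))^{2/3} on (Ω_m^{1/3}, ∞) satisfies the flat (k=0) SIV matter-dominated equations: the vacuum-pressure equation 2ä/a + (ȧ/a)² + 4(ȧ/a)(λ̇/λ) = 0 with λ(t) = 1/t, and a(Ω_m^{1/3}) extends continuously to 0, with a(1) = 1. -/
/-!
For `a = w ^ p` with `w > 0`, the logarithmic derivatives are `ȧ/a = p ẇ/w` and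
`ä/a = p ẅ/w + p (p - 1) (ẇ/w)²`. With `p = 2/3` and `w ∝ t³ - Ω_m` (so `ẇ/w = 3t²/(t³ - Ω_m)`,
`ẅ = 2ẇ/t`) the terms of `2ä/a + (ȧ/a)² - 4(ȧ/a)/t` cancel in pairs. The boundary
behaviour is continuity of `w ^ (2/3)` at the zero `Ω_m^{1/3}` of `w`.
-/

open Filter Topology

section RpowLogDeriv

variable {w w' : ℝ → ℝ} {w'' t : ℝ}

theorem deriv_rpow_div_rpow (p : ℝ) (hw : HasDerivAt w (w' t) t) (ht : 0 < w t) :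
    deriv (fun x => w x ^ p) t / w t ^ p = p * w' t / w t := by
  rw [(hw.rpow_const (p := p) (Or.inl ht.ne')).deriv, Real.rpow_sub_one ht.ne']
  have := (Real.rpow_pos_of_pos ht p).ne'
  field_simp

theorem deriv_deriv_rpow_div_rpow (p : ℝ) (hw : ∀ᶠ x in 𝓝 t, HasDerivAt w (w' x) x)
    (hw' : HasDerivAt w' w'' t) (ht : 0 < w t) :
    deriv (deriv fun x => w x ^ p) t / w t ^ p
      = p * w'' / w t + p * (p - 1) * (w' t / w t) ^ 2 := by
  have hpos : ∀ᶠ x in 𝓝 t, 0 < w x :=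
    hw.self_of_nhds.continuousAt.eventually (lt_mem_nhds ht)
  have hderiv : deriv (fun x => w x ^ p) =ᶠ[𝓝 t] fun x => w' x * p * w x ^ (p - 1) := by
    filter_upwards [hw, hpos] with x hx hx0
    exact (hx.rpow_const (Or.inl hx0.ne')).deriv
  have hsecond : HasDerivAt (fun x => w' x * p * w x ^ (p - 1))
      (w'' * p * w t ^ (p - 1) + w' t * p * (w' t * (p - 1) * w t ^ (p - 1 - 1))) t :=
    (hw'.mul_const p).mul (hw.self_of_nhds.rpow_const (Or.inl ht.ne'))
  rw [hderiv.deriv_eq, hsecond.deriv, Real.rpow_sub_one ht.ne' (p - 1),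
    Real.rpow_sub_one ht.ne' p]
  have := (Real.rpow_pos_of_pos ht p).ne'
  field_simp

end RpowLogDeriv

/-- `-1 / t` is `λ̇/λ` for `λ = 1/t`. -/
def SIVFlatDustEquation (a : ℝ → ℝ) (t : ℝ) : Prop :=
  2 * deriv (deriv a) t / a t + (deriv a t / a t) ^ 2 + 4 * (deriv a t / a t) * (-1 / t) = 0

theorem sivFlatDustEquation_cubic_rpow_two_thirds {m k t : ℝ} (hw : 0 < (t ^ 3 - m) / k) :
    SIVFlatDustEquation (fun x => ((x ^ 3 - m) / k) ^ ((2 : ℝ) / 3)) t := by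
  have hk : k ≠ 0 := by rintro rfl; simp at hw
  have hw0 : t ^ 3 - m ≠ 0 := fun h => hw.ne' (by rw [h, zero_div])
  have hw' : ∀ x, HasDerivAt (fun x : ℝ => (x ^ 3 - m) / k) (3 * x ^ 2 / k) x := fun x => by
    simpa using ((hasDerivAt_pow 3 x).sub_const m).div_const k
  have hw'' : HasDerivAt (fun x : ℝ => 3 * x ^ 2 / k) (6 * t / k) t :=
    (((hasDerivAt_pow 2 t).const_mul 3).div_const k).congr_deriv (by norm_num; ring)
  have hHubble := deriv_rpow_div_rpow (w := fun x => (x ^ 3 - m) / k)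
    (w' := fun x => 3 * x ^ 2 / k) (2 / 3) (hw' t) hw
  have hAccel := deriv_deriv_rpow_div_rpow (w := fun x => (x ^ 3 - m) / k)
    (w' := fun x => 3 * x ^ 2 / k) (2 / 3) (Eventually.of_forall hw') hw'' hw
  rw [SIVFlatDustEquation, mul_div_assoc, hAccel, hHubble]
  field_simp
  ring

theorem siv_matter_scale_factor
    (Ωm : ℝ) (hΩ : 0 < Ωm ∧ Ωm < 1)
    (a : ℝ → ℝ)
    (ha : ∀ t : ℝ, a t = ((t ^ 3 - Ωm) / (1 - Ωm)) ^ ((2 : ℝ) / 3)) :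
    (∀ t : ℝ, Ωm ^ ((1 : ℝ) / 3) < t →
      2 * deriv (deriv a) t / a t + (deriv a t / a t) ^ 2
        + 4 * (deriv a t / a t) * (-1 / t) = 0) ∧
    Filter.Tendsto a (nhdsWithin (Ωm ^ ((1 : ℝ) / 3)) (Set.Ioi (Ωm ^ ((1 : ℝ) / 3)))) (nhds 0) ∧
    a 1 = 1 := by
  obtain ⟨hΩ0, hΩ1⟩ := hΩ
  obtain rfl : a = fun t => ((t ^ 3 - Ωm) / (1 - Ωm)) ^ ((2 : ℝ) / 3) := funext ha
  have hk : 0 < 1 - Ωm := by linarith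
  have hc0 : 0 ≤ Ωm ^ ((1 : ℝ) / 3) := Real.rpow_nonneg hΩ0.le _
  have hc3 : (Ωm ^ ((1 : ℝ) / 3)) ^ 3 = Ωm := by
    simpa using Real.rpow_inv_natCast_pow hΩ0.le (n := 3) (by norm_num)
  refine ⟨fun t ht => ?_, ?_, by simp [hk.ne']⟩
  · have hw : 0 < (t ^ 3 - Ωm) / (1 - Ωm) := by
      have := pow_lt_pow_left₀ ht hc0 (by norm_num : 3 ≠ 0)
      exact div_pos (by linarith) hk
    exact sivFlatDustEquation_cubic_rpow_two_thirds hw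
  · have hcont : Continuous fun t : ℝ => ((t ^ 3 - Ωm) / (1 - Ωm)) ^ ((2 : ℝ) / 3) :=
      (Real.continuous_rpow_const (by norm_num)).comp (by fun_prop)
    convert (hcont.tendsto _).mono_left nhdsWithin_le_nhds using 2
    rw [hc3, sub_self, zero_div, Real.zero_rpow (by norm_num)]
end

section
/- For H(t) = 1/t − ((2+μ)g/3) t^{μ+1} with μ < −2 and g > 0, its derivative satisfies Ḣ(t) = −1/t² − ((μ+2)(μ+1)g/3) t^μ, and as t → 0⁺ the leading behavior of the ratio |Ḣ|/H² is 3(μ+1)/(g(μ+2)) · t^{−μ−2}, so that |Ḣ|/H² → 0 as t → 0⁺. -/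
theorem siv_inflation_condition_asymptotics
    (g μ : ℝ) (hg : 0 < g) (hμ : μ < -2)
    (H : ℝ → ℝ)
    (hH : ∀ t : ℝ, H t = 1 / t - ((2 + μ) * g / 3) * t ^ (μ + 1)) :
    (∀ t : ℝ, 0 < t →
      deriv H t = -1 / t ^ 2 - ((μ + 2) * (μ + 1) * g / 3) * t ^ μ) ∧
    Filter.Tendsto
      (fun t : ℝ =>
        (|deriv H t| / (H t) ^ 2) / ((3 * (μ + 1) / (g * (μ + 2))) * t ^ (-μ - 2)))
      (nhdsWithin 0 (Set.Ioi 0)) (nhds 1) ∧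
    Filter.Tendsto
      (fun t : ℝ => (3 * (μ + 1) / (g * (μ + 2))) * t ^ (-μ - 2))
      (nhdsWithin 0 (Set.Ioi 0)) (nhds 0) := by
  have hHfun : H = fun t : ℝ => 1 / t - ((2 + μ) * g / 3) * t ^ (μ + 1) := funext hH
  have hμ2 : μ + 2 < 0 := by linarith
  have hμ1 : μ + 1 < 0 := by linarith
  set A : ℝ := (μ + 2) * (μ + 1) * g / 3 with hAdef
  set B : ℝ := (2 + μ) * g / 3 with hBdef
  have hA : 0 < A := by
    have : 0 < (μ + 2) * (μ + 1) := mul_pos_of_neg_of_neg hμ2 hμ1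
    positivity
  have hB : B < 0 := by
    have h1 : (2 + μ) < 0 := by linarith
    have := mul_neg_of_neg_of_pos h1 hg
    rw [hBdef]; linarith
  have hBne : B ≠ 0 := hB.ne
  -- derivative
  have hderiv : ∀ t : ℝ, 0 < t →
      deriv H t = -1 / t ^ 2 - A * t ^ μ := by
    intro t ht
    have h1 : HasDerivAt (fun x : ℝ => 1 / x) (-(t ^ 2)⁻¹) t := by
      simpa [one_div] using hasDerivAt_inv ht.ne'
    have h2 : HasDerivAt (fun x : ℝ => x ^ (μ + 1)) ((μ + 1) * t ^ (μ + 1 - 1)) t :=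
      Real.hasDerivAt_rpow_const (Or.inl ht.ne')
    have h3 : HasDerivAt H (-(t ^ 2)⁻¹ - B * ((μ + 1) * t ^ (μ + 1 - 1))) t := by
      rw [hHfun]
      exact h1.sub (h2.const_mul B)
    rw [h3.deriv]
    have he : μ + 1 - 1 = μ := by ring
    rw [he, hAdef, hBdef]
    ring
  -- the rpow factor tends to 0
  have hx : Filter.Tendsto (fun t : ℝ => t ^ (-μ - 2)) (nhdsWithin 0 (Set.Ioi 0)) (nhds 0) := by
    have hp : 0 < -μ - 2 := by linarith
    have hco := (Real.continuousAt_rpow_const 0 (-μ - 2) (Or.inr hp.le)).continuousWithinAt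
      (s := Set.Ioi 0)
    have h0 : (0 : ℝ) ^ (-μ - 2) = 0 := Real.zero_rpow hp.ne'
    rw [ContinuousWithinAt, h0] at hco
    exact hco
  refine ⟨hderiv, ?_, ?_⟩
  · -- main limit
    have hc : (3 * (μ + 1) / (g * (μ + 2))) = A / B ^ 2 := by
      rw [div_eq_div_iff (mul_ne_zero hg.ne' hμ2.ne) (pow_ne_zero 2 hBne)]
      rw [hAdef, hBdef]
      ring
    set G : ℝ → ℝ := fun x => B ^ 2 * (A + x) / (A * (x - B) ^ 2) with hGdef
    have hden : A * ((0:ℝ) - B) ^ 2 ≠ 0 :=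
      mul_ne_zero hA.ne' (pow_ne_zero _ (by simpa using hBne))
    have hGcont : Filter.Tendsto G (nhds 0) (nhds 1) := by
      have hcont : ContinuousAt G 0 := by
        apply ContinuousAt.div
        · fun_prop
        · fun_prop
        · exact hden
      have hG0 : G 0 = 1 := by
        show B ^ 2 * (A + 0) / (A * ((0:ℝ) - B) ^ 2) = 1
        rw [div_eq_one_iff_eq hden]
        ring
      simpa [hG0] using hcont.tendsto
    have hcomp := hGcont.comp hx
    refine hcomp.congr' ?_
    filter_upwards [self_mem_nhdsWithin] with t ht
    have htpos : (0 : ℝ) < t := ht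
    have hs : 0 < t ^ (μ + 2) := Real.rpow_pos_of_pos htpos _
    set s : ℝ := t ^ (μ + 2) with hsdef
    have hxs : t ^ (-μ - 2) = s⁻¹ := by
      rw [show -μ - 2 = -(μ + 2) by ring, Real.rpow_neg htpos.le, hsdef]
    have hμt : t ^ μ = s / t ^ 2 := by
      rw [eq_div_iff (by positivity), hsdef, ← Real.rpow_natCast t 2,
        ← Real.rpow_add htpos]
      norm_num
    have hμ1t : t ^ (μ + 1) = s / t := by
      rw [eq_div_iff htpos.ne', hsdef]
      conv_rhs => rw [show μ + 2 = (μ + 1) + 1 by ring, Real.rpow_add htpos, Real.rpow_one]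
    have hHt : H t = (1 - B * s) / t := by
      rw [hH t, hμ1t]
      field_simp
    have hdt : deriv H t = -((1 + A * s) / t ^ 2) := by
      rw [hderiv t htpos, hμt]
      field_simp
      ring
    have habs : |deriv H t| = (1 + A * s) / t ^ 2 := by
      rw [hdt, abs_neg, abs_of_nonneg]
      positivity
    have hBs : (0:ℝ) < 1 - B * s := by nlinarith
    have hstep : |deriv H t| / (H t) ^ 2 = (1 + A * s) / (1 - B * s) ^ 2 := by
      rw [habs, hHt, div_pow]
      rw [div_div_div_cancel_right₀]
      exact (by positivity : (t:ℝ)^2 ≠ 0)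
    show G (t ^ (-μ - 2))
        = (|deriv H t| / (H t) ^ 2) / ((3 * (μ + 1) / (g * (μ + 2))) * t ^ (-μ - 2))
    rw [hstep, hc, hxs, hGdef]
    have hinv : s⁻¹ - B = (1 - B * s) / s := by field_simp
    have hinv2 : A + s⁻¹ = (A * s + 1) / s := by field_simp
    show B ^ 2 * (A + s⁻¹) / (A * (s⁻¹ - B) ^ 2)
        = (1 + A * s) / (1 - B * s) ^ 2 / (A / B ^ 2 * s⁻¹)
    rw [hinv, hinv2, div_pow]
    field_simp
    ring
  · -- second limit
    have := hx.const_mul (3 * (μ + 1) / (g * (μ + 2)))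
    simpa using this
end
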